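/- arXiv:2509.01973 — 2 statements merged into one kernel-verified Lean document; each statement's English description precedes it below -/
import Mathlib

section
/- Let u be a smooth function on a smooth convex domain Ω ⊆ ℝⁿ satisfying the homogeneous Neumann condition ∂_ν u = 0 on ∂Ω, where ν is the outward unit normal. Then ∂_ν(|Du|²) ≤ 0 on ∂Ω. -/
open RealInnerProductSpace

set_option maxHeartbeats 1000000

/-- On a convex domain with smooth boundary, homogeneous Neumann condition
∂_ν u = 0 on ∂Ω implies ∂_ν(|Du|²) ≤ 0 on ∂Ω.  The smoothness of the boundary
is encoded by the existence, for each tangent vector, of a C¹ boundary curve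
with that velocity, and the outward normal ν is characterized by the supporting
hyperplane property of the convex set. -/
theorem stmt_8 (n : ℕ) (Ω : Set (EuclideanSpace ℝ (Fin n)))
    (hΩo : IsOpen Ω) (hΩc : Convex ℝ Ω)
    (ν : EuclideanSpace ℝ (Fin n) → EuclideanSpace ℝ (Fin n))
    (hν : ContDiff ℝ 1 ν)
    (hνunit : ∀ x ∈ frontier Ω, ‖ν x‖ = 1)
    (hνout : ∀ x ∈ frontier Ω, ∀ y ∈ closure Ω, ⟪ν x, y - x⟫ ≤ 0)
    (hbdry : ∀ x ∈ frontier Ω, ∀ v : EuclideanSpace ℝ (Fin n), ⟪v, ν x⟫ = 0 →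
      ∃ c : ℝ → EuclideanSpace ℝ (Fin n), ContDiff ℝ 1 c ∧ c 0 = x ∧
        (∀ t, c t ∈ frontier Ω) ∧ HasDerivAt c v 0)
    (u : EuclideanSpace ℝ (Fin n) → ℝ) (hu : ContDiff ℝ (⊤ : ℕ∞) u)
    (hNeu : ∀ x ∈ frontier Ω, ⟪gradient u x, ν x⟫ = 0) :
    ∀ x ∈ frontier Ω, ⟪gradient (fun y => ‖gradient u y‖ ^ 2) x, ν x⟫ ≤ 0 := by
  intro x hx
  have hx' : x ∈ closure Ω := frontier_subset_closure hx
  set L : (EuclideanSpace ℝ (Fin n) →L[ℝ] ℝ) →L[ℝ] EuclideanSpace ℝ (Fin n) :=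
    (InnerProductSpace.toDual ℝ (EuclideanSpace ℝ (Fin n))).symm.toLinearIsometry.toContinuousLinearMap with hLdef
  have hLinner : ∀ (φ : EuclideanSpace ℝ (Fin n) →L[ℝ] ℝ) (w : EuclideanSpace ℝ (Fin n)), ⟪L φ, w⟫ = φ w := fun φ w =>
    InnerProductSpace.toDual_symm_apply
  have hgradL : gradient u = fun y => L (fderiv ℝ u y) := rfl
  -- differentiability of the gradient
  have hf1 : ContDiff ℝ 1 (fderiv ℝ u) := hu.fderiv_right (WithTop.coe_le_coe.mpr le_top)
  set D := fderiv ℝ (fderiv ℝ u) x with hD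
  have hfd : HasFDerivAt (fderiv ℝ u) D x := (hf1.differentiable one_ne_zero x).hasFDerivAt
  have hgd : HasFDerivAt (gradient u) (L.comp D) x := by
    rw [hgradL]
    exact L.hasFDerivAt.comp x hfd
  -- symmetry of the second derivative
  have hsymm : ∀ w z : EuclideanSpace ℝ (Fin n), D w z = D z w := fun w z =>
    (hu.contDiffAt.isSymmSndFDerivAt (by rw [minSmoothness_of_isRCLikeNormedField]; exact WithTop.coe_le_coe.mpr le_top)) w z
  -- tangent vector v := gradient u x
  set v := gradient u x with hv
  obtain ⟨c, hc, hc0, hcF, hcd⟩ := hbdry x hx v (hNeu x hx)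
  have hνd : HasFDerivAt ν (fderiv ℝ ν x) x := (hν.differentiable one_ne_zero x).hasFDerivAt
  -- derivative of gradient u along c
  have hgc : HasDerivAt (fun t => gradient u (c t)) (L (D v)) 0 := by
    have := (hc0 ▸ hgd).comp_hasDerivAt 0 hcd
    exact this
  have hνc : HasDerivAt (fun t => ν (c t)) (fderiv ℝ ν x v) 0 := by
    have hνd' : HasFDerivAt ν (fderiv ℝ ν x) (c 0) := by rw [hc0]; exact hνd
    have := hνd'.comp_hasDerivAt 0 hcd
    exact this
  -- differentiate the Neumann condition along c
  have hB : ⟪v, fderiv ℝ ν x v⟫ + ⟪L (D v), ν x⟫ = 0 := by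
    have h1 : HasDerivAt (fun t => ⟪gradient u (c t), ν (c t)⟫)
        (⟪gradient u (c 0), fderiv ℝ ν x v⟫ + ⟪L (D v), ν (c 0)⟫) 0 :=
      hgc.inner ℝ hνc
    have h2 : (fun t => ⟪gradient u (c t), ν (c t)⟫) = fun _ => (0 : ℝ) :=
      funext fun t => hNeu _ (hcF t)
    rw [h2] at h1
    have h3 := h1.unique (hasDerivAt_const 0 (0 : ℝ))
    rwa [hc0] at h3
  -- nonnegativity of the second fundamental form term
  have hC : 0 ≤ ⟪v, fderiv ℝ ν x v⟫ := by
    have hslope1 : Filter.Tendsto (slope c 0) (nhdsWithin 0 {(0:ℝ)}ᶜ) (nhds v) :=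
      hasDerivAt_iff_tendsto_slope.mp hcd
    have hνc' : HasDerivAt (ν ∘ c) (fderiv ℝ ν x v) 0 := hνc
    have hslope2 : Filter.Tendsto (slope (ν ∘ c) 0) (nhdsWithin 0 {(0:ℝ)}ᶜ)
        (nhds (fderiv ℝ ν x v)) := hasDerivAt_iff_tendsto_slope.mp hνc'
    have hT : Filter.Tendsto (fun t => ⟪slope (ν ∘ c) 0 t, slope c 0 t⟫)
        (nhdsWithin 0 {(0:ℝ)}ᶜ) (nhds ⟪fderiv ℝ ν x v, v⟫) :=
      hslope2.inner hslope1
    have hnonneg : ∀ t ∈ ({(0:ℝ)}ᶜ : Set ℝ),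
        (0:ℝ) ≤ ⟪slope (ν ∘ c) 0 t, slope c 0 t⟫ := by
      intro t _
      have hφ : (0:ℝ) ≤ ⟪ν (c t) - ν x, c t - x⟫ := by
        have h1 : ⟪ν x, c t - x⟫ ≤ 0 :=
          hνout x hx (c t) (frontier_subset_closure (hcF t))
        have h2 : ⟪ν (c t), x - c t⟫ ≤ 0 := hνout (c t) (hcF t) x hx'
        have h3 : ⟪ν (c t), c t - x⟫ = -⟪ν (c t), x - c t⟫ := by
          rw [← inner_neg_right]; congr 1; abel
        rw [inner_sub_left, h3]
        linarith
      have hs1 : slope c 0 t = t⁻¹ • (c t - x) := by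
        simp [slope, hc0]
      have hs2 : slope (ν ∘ c) 0 t = t⁻¹ • (ν (c t) - ν x) := by
        simp [slope, Function.comp, hc0]
      rw [hs1, hs2, real_inner_smul_left, real_inner_smul_right, ← mul_assoc]
      exact mul_nonneg (mul_self_nonneg t⁻¹) hφ
    have := ge_of_tendsto hT (by
      filter_upwards [self_mem_nhdsWithin] using hnonneg)
    rwa [real_inner_comm] at this
  -- final computation for w = ‖gradient u‖²
  set W : EuclideanSpace ℝ (Fin n) →L[ℝ] ℝ :=
    (fderivInnerCLM ℝ (v, v)).comp ((L.comp D).prod (L.comp D)) with hW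
  have hweq : (fun y : EuclideanSpace ℝ (Fin n) => ‖gradient u y‖ ^ 2) = fun y => ⟪gradient u y, gradient u y⟫ :=
    funext fun y => (real_inner_self_eq_norm_sq _).symm
  have hwfd : HasFDerivAt (fun y : EuclideanSpace ℝ (Fin n) => ‖gradient u y‖ ^ 2) W x := by
    rw [hweq]
    exact hgd.inner ℝ hgd
  have hwgrad : HasGradientAt (fun y : EuclideanSpace ℝ (Fin n) => ‖gradient u y‖ ^ 2)
      ((InnerProductSpace.toDual ℝ (EuclideanSpace ℝ (Fin n))).symm W) x := by
    rw [hasGradientAt_iff_hasFDerivAt]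
    simpa using hwfd
  have hval : ⟪gradient (fun y : EuclideanSpace ℝ (Fin n) => ‖gradient u y‖ ^ 2) x, ν x⟫ = W (ν x) := by
    rw [hwgrad.gradient]
    exact InnerProductSpace.toDual_symm_apply
  rw [hval]
  have hWval : W (ν x) = ⟪v, L (D (ν x))⟫ + ⟪L (D (ν x)), v⟫ := by
    simp [hW, fderivInnerCLM_apply]
  have hkey : ⟪L (D (ν x)), v⟫ = ⟪L (D v), ν x⟫ := by
    rw [hLinner, hLinner, hsymm]
  have e1 : ⟪v, L (D (ν x))⟫ = ⟪L (D v), ν x⟫ := by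
    rw [real_inner_comm]; exact hkey
  rw [hWval, e1, hkey]
  linarith
end

section
/- Let Ω ⊆ ℝⁿ be convex with smooth boundary, and let u, f be smooth with ∂_ν u = 0 and ∂_ν(∂_t u) = 0 on ∂Ω, ∂_ν f ≥ 0 on ∂Ω, and suppose u solves −∂_t u − εΔu + |Du|² = f in Ω. Then ∂_ν(Δu) ≤ 0 on ∂Ω. -/
open RealInnerProductSpace

/-- The partial derivative of `f` in the `i`-th coordinate direction. -/
noncomputable def pd (n : ℕ) (i : Fin n)
    (f : EuclideanSpace ℝ (Fin n) → ℝ) : EuclideanSpace ℝ (Fin n) → ℝ :=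
  fun x => fderiv ℝ f x (EuclideanSpace.single i 1)

/-- `gradient` pairs with a vector as the Fréchet derivative does. -/
theorem pd_aux_grad_inner {n : ℕ} (h : EuclideanSpace ℝ (Fin n) → ℝ)
    (y v : EuclideanSpace ℝ (Fin n)) : ⟪gradient h y, v⟫ = fderiv ℝ h y v :=
  InnerProductSpace.toDual_symm_apply

set_option maxHeartbeats 1000000 in
/-- On a smooth convex domain, if u solves −∂_t u − εΔu + |Du|² = f in Ω with
∂_ν u = 0, ∂_ν(∂_t u) = 0 and ∂_ν f ≥ 0 on ∂Ω, then ∂_ν(Δu) ≤ 0 on ∂Ω.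
The smooth boundary is encoded via C¹ boundary curves and the outward normal ν
via the supporting hyperplane property of the convex set. -/
theorem stmt_19 (n : ℕ) (ε : ℝ) (hε : 0 < ε)
    (Ω : Set (EuclideanSpace ℝ (Fin n))) (hΩo : IsOpen Ω) (hΩc : Convex ℝ Ω)
    (ν : EuclideanSpace ℝ (Fin n) → EuclideanSpace ℝ (Fin n))
    (hν : ContDiff ℝ 1 ν)
    (hνunit : ∀ x ∈ frontier Ω, ‖ν x‖ = 1)
    (hνout : ∀ x ∈ frontier Ω, ∀ y ∈ closure Ω, ⟪ν x, y - x⟫ ≤ 0)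
    (hbdry : ∀ x ∈ frontier Ω, ∀ v : EuclideanSpace ℝ (Fin n), ⟪v, ν x⟫ = 0 →
      ∃ c : ℝ → EuclideanSpace ℝ (Fin n), ContDiff ℝ 1 c ∧ c 0 = x ∧
        (∀ t, c t ∈ frontier Ω) ∧ HasDerivAt c v 0)
    (u f : ℝ → EuclideanSpace ℝ (Fin n) → ℝ)
    (hu : ContDiff ℝ (⊤ : ℕ∞) (fun p : ℝ × EuclideanSpace ℝ (Fin n) => u p.1 p.2))
    (hf : ContDiff ℝ (⊤ : ℕ∞) (fun p : ℝ × EuclideanSpace ℝ (Fin n) => f p.1 p.2))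
    (hpde : ∀ t : ℝ, ∀ x ∈ Ω,
      -(deriv (fun s => u s x) t) - ε * (∑ i, pd n i (pd n i (u t)) x)
        + ‖gradient (u t) x‖ ^ 2 = f t x)
    (hNeu : ∀ t : ℝ, ∀ x ∈ frontier Ω, ⟪gradient (u t) x, ν x⟫ = 0)
    (hNeut : ∀ t : ℝ, ∀ x ∈ frontier Ω,
      ⟪gradient (fun y => deriv (fun s => u s y) t) x, ν x⟫ = 0)
    (hNeuf : ∀ t : ℝ, ∀ x ∈ frontier Ω, 0 ≤ ⟪gradient (f t) x, ν x⟫) :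
    ∀ t : ℝ, ∀ x ∈ frontier Ω,
      ⟪gradient (fun y => ∑ i, pd n i (pd n i (u t)) y) x, ν x⟫ ≤ 0 := by
  intro t x hx
  have hxcl : x ∈ closure Ω := frontier_subset_closure hx
  set F : ℝ × (EuclideanSpace ℝ (Fin n)) → ℝ := fun p => u p.1 p.2 with hFdef
  -- smoothness of the slices
  have hut : ContDiff ℝ (⊤ : ℕ∞) (u t) := by
    have h : ContDiff ℝ (⊤ : ℕ∞) ((fun p : ℝ × EuclideanSpace ℝ (Fin n) => u p.1 p.2) ∘
        (fun y : EuclideanSpace ℝ (Fin n) => (t, y))) :=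
      hu.comp (contDiff_const.prodMk contDiff_id)
    exact h
  have hft : ContDiff ℝ (⊤ : ℕ∞) (f t) := by
    have h : ContDiff ℝ (⊤ : ℕ∞) ((fun p : ℝ × EuclideanSpace ℝ (Fin n) => f p.1 p.2) ∘
        (fun y : EuclideanSpace ℝ (Fin n) => (t, y))) :=
      hf.comp (contDiff_const.prodMk contDiff_id)
    exact h
  -- the time derivative as a smooth function of y
  have hFd : Differentiable ℝ F := hu.differentiable (by simp)
  have hDt_eq : ∀ y : (EuclideanSpace ℝ (Fin n)), deriv (fun s => u s y) t
      = fderiv ℝ F (t, y) ((1 : ℝ), (0 : (EuclideanSpace ℝ (Fin n)))) := by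
    intro y
    have h1 : HasDerivAt (fun s : ℝ => ((s, y) : ℝ × (EuclideanSpace ℝ (Fin n)))) ((1 : ℝ), (0 : (EuclideanSpace ℝ (Fin n)))) t :=
      (hasDerivAt_id' (x := t)).prodMk (hasDerivAt_const t y)
    exact ((hFd (t, y)).hasFDerivAt.comp_hasDerivAt t h1).deriv
  have hDt : ContDiff ℝ (⊤ : ℕ∞) (fun y : (EuclideanSpace ℝ (Fin n)) => deriv (fun s => u s y) t) := by
    have h2 : ContDiff ℝ (⊤ : ℕ∞) (fun y : (EuclideanSpace ℝ (Fin n)) => fderiv ℝ F (t, y) ((1 : ℝ), (0 : (EuclideanSpace ℝ (Fin n))))) := by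
      have h3 : ContDiff ℝ (⊤ : ℕ∞) ((fderiv ℝ F) ∘
          (fun y : EuclideanSpace ℝ (Fin n) => (t, y))) :=
        (hu.fderiv_right (by simp)).comp (contDiff_const.prodMk contDiff_id)
      exact h3.clm_apply contDiff_const
    simpa only [hDt_eq] using h2
  -- the Laplacian is smooth
  have hpdC : ∀ (h : (EuclideanSpace ℝ (Fin n)) → ℝ), ContDiff ℝ (⊤ : ℕ∞) h → ∀ i : Fin n, ContDiff ℝ (⊤ : ℕ∞) (pd n i h) :=
    fun h hh i => (hh.fderiv_right (by simp)).clm_apply contDiff_const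
  have hΔ : ContDiff ℝ (⊤ : ℕ∞) (fun y : (EuclideanSpace ℝ (Fin n)) => ∑ i, pd n i (pd n i (u t)) y) :=
    ContDiff.sum fun i _ => hpdC _ (hpdC _ hut i) i
  -- the squared gradient is smooth
  set L : ((EuclideanSpace ℝ (Fin n)) →L[ℝ] ℝ) →L[ℝ] (EuclideanSpace ℝ (Fin n)) :=
    (InnerProductSpace.toDual ℝ
      (EuclideanSpace ℝ (Fin n))).symm.toContinuousLinearEquiv.toContinuousLinearMap with hLdef
  have hGC : ContDiff ℝ (⊤ : ℕ∞) (fun y : (EuclideanSpace ℝ (Fin n)) => gradient (u t) y) := by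
    have h : ContDiff ℝ (⊤ : ℕ∞) (fun y : (EuclideanSpace ℝ (Fin n)) => L (fderiv ℝ (u t) y)) :=
      L.contDiff.comp (hut.fderiv_right (by simp))
    exact h
  have hQC : ContDiff ℝ (⊤ : ℕ∞) (fun y : (EuclideanSpace ℝ (Fin n)) => ‖gradient (u t) y‖ ^ 2) := hGC.norm_sq (𝕜 := ℝ)
  -- the PDE combination g vanishes on Ω, hence its fderiv vanishes on closure Ω
  set g : (EuclideanSpace ℝ (Fin n)) → ℝ := fun y => -(deriv (fun s => u s y) t)
      - ε * (∑ i, pd n i (pd n i (u t)) y) + ‖gradient (u t) y‖ ^ 2 - f t y with hgdef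
  have hg0 : ∀ y ∈ Ω, g y = 0 := fun y hy => by
    simp only [hgdef, sub_eq_zero]; exact hpde t y hy
  have hgC : ContDiff ℝ (⊤ : ℕ∞) g :=
    ((hDt.neg.sub (contDiff_const.mul hΔ)).add hQC).sub hft
  have hfg0 : ∀ y ∈ Ω, fderiv ℝ g y = 0 := by
    intro y hy
    have hev : g =ᶠ[nhds y] fun _ => (0 : ℝ) :=
      Filter.eventually_of_mem (hΩo.mem_nhds hy) fun z hz => hg0 z hz
    rw [hev.fderiv_eq, fderiv_fun_const]
    rfl
  have hx0 : fderiv ℝ g x = 0 := by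
    have hcont : Continuous (fderiv ℝ g) := (hgC.fderiv_right (m := 1) (WithTop.coe_le_coe.mpr le_top)).continuous
    have := (Set.EqOn.closure (fun y hy => hfg0 y hy) hcont continuous_const) hxcl
    simpa using this
  -- differentiability of the pieces at x
  have hDtd : HasFDerivAt (fun y : (EuclideanSpace ℝ (Fin n)) => deriv (fun s => u s y) t)
      (fderiv ℝ (fun y : (EuclideanSpace ℝ (Fin n)) => deriv (fun s => u s y) t) x) x :=
    (hDt.differentiable (by simp) x).hasFDerivAt
  have hΔd : HasFDerivAt (fun y : (EuclideanSpace ℝ (Fin n)) => ∑ i, pd n i (pd n i (u t)) y)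
      (fderiv ℝ (fun y : (EuclideanSpace ℝ (Fin n)) => ∑ i, pd n i (pd n i (u t)) y) x) x :=
    (hΔ.differentiable (by simp) x).hasFDerivAt
  have hQd : HasFDerivAt (fun y : (EuclideanSpace ℝ (Fin n)) => ‖gradient (u t) y‖ ^ 2)
      (fderiv ℝ (fun y : (EuclideanSpace ℝ (Fin n)) => ‖gradient (u t) y‖ ^ 2) x) x :=
    (hQC.differentiable (by simp) x).hasFDerivAt
  have hftd : HasFDerivAt (f t) (fderiv ℝ (f t) x) x :=
    (hft.differentiable (by simp) x).hasFDerivAt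
  have hgder : HasFDerivAt g
      (-(fderiv ℝ (fun y : (EuclideanSpace ℝ (Fin n)) => deriv (fun s => u s y) t) x)
        - ε • fderiv ℝ (fun y : (EuclideanSpace ℝ (Fin n)) => ∑ i, pd n i (pd n i (u t)) y) x
        + fderiv ℝ (fun y : (EuclideanSpace ℝ (Fin n)) => ‖gradient (u t) y‖ ^ 2) x
        - fderiv ℝ (f t) x) x :=
    ((hDtd.neg.sub (hΔd.const_mul ε)).add hQd).sub hftd
  have hcomb : -(fderiv ℝ (fun y : (EuclideanSpace ℝ (Fin n)) => deriv (fun s => u s y) t) x)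
        - ε • fderiv ℝ (fun y : (EuclideanSpace ℝ (Fin n)) => ∑ i, pd n i (pd n i (u t)) y) x
        + fderiv ℝ (fun y : (EuclideanSpace ℝ (Fin n)) => ‖gradient (u t) y‖ ^ 2) x
        - fderiv ℝ (f t) x = 0 := by
    rw [← hgder.fderiv]; exact hx0
  have hval : -(fderiv ℝ (fun y : (EuclideanSpace ℝ (Fin n)) => deriv (fun s => u s y) t) x (ν x))
        - ε * fderiv ℝ (fun y : (EuclideanSpace ℝ (Fin n)) => ∑ i, pd n i (pd n i (u t)) y) x (ν x)
        + fderiv ℝ (fun y : (EuclideanSpace ℝ (Fin n)) => ‖gradient (u t) y‖ ^ 2) x (ν x)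
        - fderiv ℝ (f t) x (ν x) = 0 := by
    have := congrArg (fun L : (EuclideanSpace ℝ (Fin n)) →L[ℝ] ℝ => L (ν x)) hcomb
    simpa [smul_eq_mul] using this
  -- the normal derivative of the time derivative vanishes
  have hDtν : fderiv ℝ (fun y : (EuclideanSpace ℝ (Fin n)) => deriv (fun s => u s y) t) x (ν x) = 0 := by
    rw [← pd_aux_grad_inner]; exact hNeut t x hx
  have hfν : 0 ≤ fderiv ℝ (f t) x (ν x) := by
    rw [← pd_aux_grad_inner]; exact hNeuf t x hx
  -- second derivative setup
  have hLinner : ∀ (φ : (EuclideanSpace ℝ (Fin n)) →L[ℝ] ℝ) (v : (EuclideanSpace ℝ (Fin n))), ⟪L φ, v⟫ = φ v := fun φ v =>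
    InnerProductSpace.toDual_symm_apply
  have hutd : ∀ y : (EuclideanSpace ℝ (Fin n)), HasFDerivAt (u t) (fderiv ℝ (u t) y) y := fun y =>
    (hut.differentiable (by simp) y).hasFDerivAt
  set A := fderiv ℝ (fderiv ℝ (u t)) x with hAdef
  have hA : HasFDerivAt (fderiv ℝ (u t)) A x :=
    ((hut.fderiv_right (m := (⊤ : ℕ∞)) (by simp)).differentiable (by simp) x).hasFDerivAt
  have hAsymm : ∀ v w : (EuclideanSpace ℝ (Fin n)), A v w = A w v := second_derivative_symmetric hutd hA
  have hGder : HasFDerivAt (fun y : (EuclideanSpace ℝ (Fin n)) => gradient (u t) y) (L.comp A) x :=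
    L.hasFDerivAt.comp x hA
  set w := gradient (u t) x with hwdef
  -- the boundary curve in direction w
  have hwν : ⟪w, ν x⟫ = 0 := hNeu t x hx
  obtain ⟨c, hcC, hc0, hcf, hc'⟩ := hbdry x hx w hwν
  -- convexity: second fundamental form nonneg in direction w
  have hνcd : HasDerivAt (fun s => ν (c s)) (fderiv ℝ ν x (w)) 0 := by
    have := ((hν.differentiable one_ne_zero (c 0)).hasFDerivAt).comp_hasDerivAt 0 hc'
    rw [hc0] at this
    exact this
  have hSFF : 0 ≤ ⟪fderiv ℝ ν x w, w⟫ := by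
    have hslc : Filter.Tendsto (slope c 0) (nhdsWithin 0 {(0:ℝ)}ᶜ) (nhds w) :=
      hasDerivAt_iff_tendsto_slope.1 hc'
    have hslν : Filter.Tendsto (slope (fun s => ν (c s)) 0) (nhdsWithin 0 {(0:ℝ)}ᶜ)
        (nhds (fderiv ℝ ν x w)) := hasDerivAt_iff_tendsto_slope.1 hνcd
    have htend : Filter.Tendsto (fun s => ⟪slope (fun s' => ν (c s')) 0 s, slope c 0 s⟫)
        (nhdsWithin 0 {(0:ℝ)}ᶜ) (nhds ⟪fderiv ℝ ν x w, w⟫) := hslν.inner hslc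
    refine ge_of_tendsto htend ?_
    refine Filter.eventually_of_mem self_mem_nhdsWithin (fun s hs => ?_)
    have hs0 : s ≠ 0 := hs
    have hinner : 0 ≤ ⟪ν (c s) - ν x, c s - x⟫ := by
      have h1 : ⟪ν (c s), x - c s⟫ ≤ 0 := hνout (c s) (hcf s) x hxcl
      have h2 : ⟪ν x, c s - x⟫ ≤ 0 := hνout x hx (c s) (frontier_subset_closure (hcf s))
      have h1' : 0 ≤ ⟪ν (c s), c s - x⟫ := by
        have : x - c s = -(c s - x) := by abel
        rw [this, inner_neg_right] at h1; linarith
      rw [inner_sub_left]; linarith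
    have e : ∀ p : ℝ → EuclideanSpace ℝ (Fin n), slope p 0 s = s⁻¹ • (p s - p 0) := by
      intro p; rw [slope_def_module]; ring_nf
    rw [e, e, hc0, real_inner_smul_left, real_inner_smul_right, ← mul_assoc, ← sq]
    exact mul_nonneg (sq_nonneg _) hinner
  -- differentiating the Neumann condition along the curve
  have hGx : HasFDerivAt (fun y : (EuclideanSpace ℝ (Fin n)) => gradient (u t) y) (L.comp A) (c 0) := hc0 ▸ hGder
  have hGcd : HasDerivAt (fun s => gradient (u t) (c s)) (L (A w)) 0 := by
    exact hGx.comp_hasDerivAt 0 hc'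
  have hh : HasDerivAt (fun s => ⟪gradient (u t) (c s), ν (c s)⟫)
      (⟪gradient (u t) (c 0), fderiv ℝ ν x w⟫ + ⟪L (A w), ν (c 0)⟫) 0 :=
    hGcd.inner ℝ hνcd
  have hzero : (fun s => ⟪gradient (u t) (c s), ν (c s)⟫) = fun _ => (0:ℝ) :=
    funext fun s => hNeu t (c s) (hcf s)
  have hkey : ⟪w, fderiv ℝ ν x w⟫ + A w (ν x) = 0 := by
    have h0 : ⟪gradient (u t) (c 0), fderiv ℝ ν x w⟫ + ⟪L (A w), ν (c 0)⟫ = 0 :=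
      hh.unique (by rw [hzero]; exact hasDerivAt_const 0 0)
    rw [hc0, hLinner] at h0
    exact h0
  have hAwν : A w (ν x) ≤ 0 := by
    have h1 : ⟪fderiv ℝ ν x w, w⟫ = ⟪w, fderiv ℝ ν x w⟫ := real_inner_comm _ _
    linarith [hSFF]
  -- the normal derivative of the squared gradient
  have hQeq : (fun y : (EuclideanSpace ℝ (Fin n)) => ‖gradient (u t) y‖ ^ 2)
      = fun y : (EuclideanSpace ℝ (Fin n)) => ⟪gradient (u t) y, gradient (u t) y⟫ :=
    funext fun y => (real_inner_self_eq_norm_sq _).symm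
  have hQder2 : HasFDerivAt (fun y : (EuclideanSpace ℝ (Fin n)) => ‖gradient (u t) y‖ ^ 2)
      ((fderivInnerCLM ℝ (gradient (u t) x, gradient (u t) x)).comp
        ((L.comp A).prod (L.comp A))) x := by
    rw [hQeq]; exact hGder.inner ℝ hGder
  have hQν : fderiv ℝ (fun y : (EuclideanSpace ℝ (Fin n)) => ‖gradient (u t) y‖ ^ 2) x (ν x) = 2 * A w (ν x) := by
    rw [hQder2.fderiv]
    have e1 : ⟪L (A (ν x)), w⟫ = A (ν x) w := hLinner _ _
    have e2 : ⟪w, L (A (ν x))⟫ = ⟪L (A (ν x)), w⟫ := real_inner_comm _ _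
    have e3 : A (ν x) w = A w (ν x) := hAsymm _ _
    simp only [ContinuousLinearMap.comp_apply, ContinuousLinearMap.prod_apply,
      fderivInnerCLM_apply, ← hwdef]
    rw [e2, e1, e3]; ring
  -- conclude
  rw [pd_aux_grad_inner]
  nlinarith [hval, hDtν, hfν, hQν, hAwν, hε]
end
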